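/- arXiv:2310.15286 — 3 statements merged into one kernel-verified Lean document; each statement's English description precedes it below -/
import Mathlib

section
/- Let t, d ∈ ℕ with d ≥ 1, let x_1,…,x_t ∈ [−1,1]^d, let w̄ ∈ ℝ^d, e_1,…,e_t ∈ ℝ, and set y_τ = x_τᵀw̄ + e_τ. For λ > 0 let ŵ_t be any minimizer over w ∈ ℝ^d of Σ_{τ=1}^t (y_τ − x_τᵀw)² + λ‖w‖₁. Let S̄ := {i : w̄_i ≠ 0} and Σ_t := Σ_{τ=1}^t x_τ x_τᵀ. Suppose ‖Σ_{τ=1}^t e_τ x_τ‖_∞ ≤ λ/4, and suppose Σ̄ ∈ ℝ^{d×d} is a positive semidefinite matrix with σ²_min(Σ̄, |S̄|) > 0 and ‖t^{-1}Σ_t − Σ̄‖_∞ ≤ σ²_min(Σ̄, |S̄|)/(32|S̄|), where ‖M‖_∞ denotes the entrywise maximum absolute value. Then ‖ŵ_t − w̄‖₁ ≤ 8λ|S̄| / (t · σ²_min(Σ̄, |S̄|)). -/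
/-- The restricted minimum eigenvalue `σ²_min(M, s)` of a positive semidefinite matrix
`M ∈ ℝ^{d×d}` at sparsity level `s`: the infimum, over index sets `I` with `|I| ≤ s`
and vectors `β` with `β_I ≠ 0` and `‖β_{I^c}‖₁ ≤ 3‖β_I‖₁`, of `(βᵀMβ)/‖β_I‖₂²`. -/
noncomputable def restrictedMinEigenvalueSq {d : ℕ} (M : Matrix (Fin d) (Fin d) ℝ) (s : ℕ) : ℝ :=
  sInf {v : ℝ | ∃ (I : Finset (Fin d)) (β : Fin d → ℝ),
    I.card ≤ s ∧ (∃ i ∈ I, β i ≠ 0) ∧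
    (∑ i ∈ Iᶜ, |β i|) ≤ 3 * ∑ i ∈ I, |β i| ∧
    v = (∑ i, ∑ j, β i * M i j * β j) / (∑ i ∈ I, β i ^ 2)}

/-!
Write `Δ = ŵ - w̄`, `u = ‖Δ_S̄‖₁`, `v = ‖Δ_S̄ᶜ‖₁` and `q = ∑_τ (x_τᵀ Δ)²`. Comparing the Lasso
objective at `ŵ` and at `w̄`, the noise bound and the decomposability of the `ℓ₁` norm over the
support `S̄` give the basic inequality `q + λv/2 ≤ 3λu/2`; in particular `Δ` lies in the cone
`v ≤ 3u`. On that cone the restricted eigenvalue gives `σ² ‖Δ_S̄‖₂² ≤ ΔᵀΣ̄Δ`, and replacing `Σ̄` by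
`Σ_t / t` costs at most `σ²/(32|S̄|) ‖Δ‖₁² ≤ σ² ‖Δ_S̄‖₂² / 2` (cone and Cauchy–Schwarz), so
`q ≥ t σ² ‖Δ_S̄‖₂² / 2 ≥ t σ² u² / (2|S̄|)`. The basic inequality then reads
`λ(u + v) ≤ 4λu - t σ² u² / |S̄| ≤ 4λ²|S̄| / (t σ²)`, which is the claim with constant `4`.
-/

open Finset

lemma Real.nonempty_of_sInf_pos {S : Set ℝ} (h : 0 < sInf S) : S.Nonempty := by
  contrapose! h
  rw [h, Real.sInf_empty]

lemma Real.bddBelow_of_sInf_pos {S : Set ℝ} (h : 0 < sInf S) : BddBelow S := by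
  contrapose! h
  rw [Real.sInf_of_not_bddBelow h]

section RestrictedEigenvalue

variable {d : ℕ} {M : Matrix (Fin d) (Fin d) ℝ} {s : ℕ}

lemma pos_of_restrictedMinEigenvalueSq_pos (h : 0 < restrictedMinEigenvalueSq M s) : 0 < s := by
  obtain ⟨_, I, -, hI, ⟨i, hi, -⟩, -⟩ := Real.nonempty_of_sInf_pos h
  exact (card_pos.mpr ⟨i, hi⟩).trans_le hI

lemma restrictedMinEigenvalueSq_mul_le (h : 0 < restrictedMinEigenvalueSq M s)
    {I : Finset (Fin d)} (hI : I.card ≤ s) {β : Fin d → ℝ}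
    (hcone : ∑ i ∈ Iᶜ, |β i| ≤ 3 * ∑ i ∈ I, |β i|) :
    restrictedMinEigenvalueSq M s * ∑ i ∈ I, β i ^ 2 ≤ ∑ i, ∑ j, β i * M i j * β j := by
  by_cases hβ : ∃ i ∈ I, β i ≠ 0
  · obtain ⟨i, hi, hβi⟩ := hβ
    have hpos : 0 < ∑ i ∈ I, β i ^ 2 :=
      sum_pos' (fun _ _ ↦ sq_nonneg _) ⟨i, hi, by positivity⟩
    rw [← le_div_iff₀ hpos]
    exact csInf_le (Real.bddBelow_of_sInf_pos h) ⟨I, β, hI, ⟨i, hi, hβi⟩, hcone, rfl⟩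
  · -- the cone condition forces `β = 0` once `β` vanishes on `I`
    push Not at hβ
    have hI0 : ∑ i ∈ I, |β i| = 0 := sum_eq_zero fun i hi ↦ by simp [hβ i hi]
    have hl1 : ∑ i, |β i| = 0 :=
      le_antisymm (by linarith [sum_add_sum_compl I fun i ↦ |β i|])
        (sum_nonneg fun _ _ ↦ abs_nonneg _)
    have hβ0 : β = 0 := funext fun i ↦
      abs_eq_zero.mp ((sum_eq_zero_iff_of_nonneg fun _ _ ↦ abs_nonneg _).mp hl1 i (mem_univ i))
    simp [hβ0]

end RestrictedEigenvalue

section Lasso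

variable {ι κ : Type*} [Fintype ι] [Fintype κ]

lemma sum_mul_le_mul_sum_abs {a v : κ → ℝ} {c : ℝ} (h : ∀ i, |a i| ≤ c) :
    ∑ i, a i * v i ≤ c * ∑ i, |v i| := by
  rw [mul_sum]
  refine sum_le_sum fun i _ ↦ ?_
  calc a i * v i ≤ |a i| * |v i| := (le_abs_self _).trans_eq (abs_mul _ _)
    _ ≤ c * |v i| := by gcongr; exact h i

lemma sum_abs_sub_sum_abs_le [DecidableEq κ] {S : Finset κ} {w w' : κ → ℝ}
    (hw : ∀ i ∉ S, w i = 0) :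
    ∑ i, |w i| - ∑ i, |w' i| ≤ ∑ i ∈ S, |w' i - w i| - ∑ i ∈ Sᶜ, |w' i - w i| := by
  rw [← sum_add_sum_compl S fun i ↦ |w i|, ← sum_add_sum_compl S fun i ↦ |w' i|]
  have hS : ∑ i ∈ S, |w i| - ∑ i ∈ S, |w' i| ≤ ∑ i ∈ S, |w' i - w i| := by
    rw [← sum_sub_distrib]
    gcongr with i
    exact (abs_sub_abs_le_abs_sub _ _).trans_eq (abs_sub_comm _ _)
  have hSc : ∑ i ∈ Sᶜ, |w i| = 0 := sum_eq_zero fun i hi ↦ by simp [hw i (mem_compl.mp hi)]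
  have hSc' : ∑ i ∈ Sᶜ, |w' i| = ∑ i ∈ Sᶜ, |w' i - w i| :=
    sum_congr rfl fun i hi ↦ by rw [hw i (mem_compl.mp hi), sub_zero]
  linarith

lemma sum_sum_mul_gram_div_mul (x : ι → κ → ℝ) (c : ℝ) (v : κ → ℝ) :
    ∑ i, ∑ j, v i * ((∑ τ, x τ i * x τ j) / c) * v j = (∑ τ, (∑ i, x τ i * v i) ^ 2) / c := by
  calc ∑ i, ∑ j, v i * ((∑ τ, x τ i * x τ j) / c) * v j
      = ∑ i, ∑ j, ∑ τ, x τ i * v i * (x τ j * v j) / c := by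
        simp_rw [sum_div, mul_sum, sum_mul]
        exact Fintype.sum_congr _ _ fun i ↦ Fintype.sum_congr _ _ fun j ↦
          Fintype.sum_congr _ _ fun τ ↦ by ring
    _ = ∑ i, ∑ τ, ∑ j, x τ i * v i * (x τ j * v j) / c :=
        Fintype.sum_congr _ _ fun i ↦ Finset.sum_comm
    _ = ∑ τ, ∑ i, ∑ j, x τ i * v i * (x τ j * v j) / c := Finset.sum_comm
    _ = (∑ τ, (∑ i, x τ i * v i) ^ 2) / c := by
        simp_rw [sq, Fintype.sum_mul_sum, sum_div]

lemma sum_sum_mul_mul_le_of_abs_sub_le {A B : κ → κ → ℝ} {ε : ℝ}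
    (h : ∀ i j, |A i j - B i j| ≤ ε) (v : κ → ℝ) :
    ∑ i, ∑ j, v i * B i j * v j ≤ ∑ i, ∑ j, v i * A i j * v j + ε * (∑ i, |v i|) ^ 2 := by
  rw [← sub_le_iff_le_add', ← sum_sub_distrib, sq, Fintype.sum_mul_sum, mul_sum]
  refine sum_le_sum fun i _ ↦ ?_
  rw [← sum_sub_distrib, mul_sum]
  refine sum_le_sum fun j _ ↦ ?_
  calc v i * B i j * v j - v i * A i j * v j = v i * (B i j - A i j) * v j := by ring
    _ ≤ |v i| * |B i j - A i j| * |v j| := by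
      rw [← abs_mul, ← abs_mul]; exact le_abs_self _
    _ = |A i j - B i j| * (|v i| * |v j|) := by rw [abs_sub_comm]; ring
    _ ≤ ε * (|v i| * |v j|) := by gcongr; exact h i j

lemma lasso_basic_inequality [DecidableEq κ] {x : ι → κ → ℝ} {wbar what : κ → ℝ} {e y : ι → ℝ}
    {lam : ℝ} {S : Finset κ} (hy : ∀ τ, y τ = ∑ i, x τ i * wbar i + e τ)
    (hmin : ∑ τ, (y τ - ∑ i, x τ i * what i) ^ 2 + lam * ∑ i, |what i| ≤
      ∑ τ, (y τ - ∑ i, x τ i * wbar i) ^ 2 + lam * ∑ i, |wbar i|)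
    (hsupp : ∀ i ∉ S, wbar i = 0) (hlam : 0 ≤ lam) (hnoise : ∀ i, |∑ τ, e τ * x τ i| ≤ lam / 4) :
    ∑ τ, (∑ i, x τ i * (what i - wbar i)) ^ 2 + lam / 2 * ∑ i ∈ Sᶜ, |what i - wbar i| ≤
      3 * lam / 2 * ∑ i ∈ S, |what i - wbar i| := by
  set a : ι → ℝ := fun τ ↦ ∑ i, x τ i * (what i - wbar i)
  have hres : ∀ τ, y τ - ∑ i, x τ i * what i = e τ - a τ := fun τ ↦ by
    simp only [a, hy, mul_sub, sum_sub_distrib]; ring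
  have hres_bar : ∀ τ, y τ - ∑ i, x τ i * wbar i = e τ := fun τ ↦ by rw [hy]; ring
  have hexpand : ∑ τ, (e τ - a τ) ^ 2 = ∑ τ, e τ ^ 2 - 2 * ∑ τ, e τ * a τ + ∑ τ, a τ ^ 2 := by
    simp only [sub_sq, sum_add_distrib, sum_sub_distrib, mul_sum, mul_assoc]
  have hnoise_a : ∑ τ, e τ * a τ ≤
      lam / 4 * (∑ i ∈ S, |what i - wbar i| + ∑ i ∈ Sᶜ, |what i - wbar i|) := by
    rw [sum_add_sum_compl]
    calc ∑ τ, e τ * a τ = ∑ i, (∑ τ, e τ * x τ i) * (what i - wbar i) := by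
          simp only [a, mul_sum, sum_mul, mul_assoc]; exact sum_comm
      _ ≤ _ := sum_mul_le_mul_sum_abs hnoise
  have hl1 := mul_le_mul_of_nonneg_left (sum_abs_sub_sum_abs_le (w' := what) hsupp) hlam
  simp only [hres, hres_bar, hexpand] at hmin
  linarith

lemma le_three_mul_of_lasso_basic {lam q u v : ℝ} (hlam : 0 < lam) (hq : 0 ≤ q)
    (hbasic : q + lam / 2 * v ≤ 3 * lam / 2 * u) : v ≤ 3 * u := by
  nlinarith

lemma add_le_of_lasso_inequalities {lam σ s t u v b q : ℝ} (hlam : 0 < lam) (hσ : 0 < σ)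
    (hs : 0 < s) (ht : 0 ≤ t) (hv : 0 ≤ v) (hq : 0 ≤ q)
    (hbasic : q + lam / 2 * v ≤ 3 * lam / 2 * u) (hcs : u ^ 2 ≤ s * b)
    (hcurv : σ * b ≤ q / t + σ / (32 * s) * (u + v) ^ 2) :
    u + v ≤ 4 * lam * s / (t * σ) := by
  have hcone := le_three_mul_of_lasso_basic hlam hq hbasic
  have herr : σ / (32 * s) * (u + v) ^ 2 ≤ σ * b / 2 := by
    calc σ / (32 * s) * (u + v) ^ 2 ≤ σ / (32 * s) * (16 * (s * b)) := by gcongr; nlinarith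
      _ = σ * b / 2 := by field_simp; ring
  rcases ht.eq_or_lt with rfl | ht
  · -- `q / 0 = 0`, so the curvature bound alone forces `b = 0`
    have hb : b ≤ 0 := by
      rw [div_zero] at hcurv; nlinarith
    have hu : u = 0 := by nlinarith
    rw [zero_mul, div_zero]; linarith
  · have hq' : σ * t * b / 2 ≤ q := by
      have := (le_div_iff₀ ht).mp (show σ * b / 2 ≤ q / t by linarith); linarith
    have hquad : s * (lam * (u + v)) ≤ 4 * lam * s * u - σ * t * u ^ 2 := by
      nlinarith [mul_le_mul_of_nonneg_left hcs (mul_pos hσ ht).le]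
    have hamgm : σ * t * (4 * lam * s * u - σ * t * u ^ 2) ≤ (2 * lam * s) ^ 2 := by
      nlinarith [sq_nonneg (σ * t * u - 2 * lam * s)]
    rw [le_div_iff₀ (by positivity)]
    nlinarith [mul_pos hlam hs, mul_le_mul_of_nonneg_left hquad (mul_pos hσ ht).le]

end Lasso

theorem lasso_l1_error_bound_general {t d : ℕ}
    (x : Fin t → Fin d → ℝ)
    (wbar : Fin d → ℝ) (e : Fin t → ℝ) (y : Fin t → ℝ)
    (hy : ∀ τ, y τ = (∑ i, x τ i * wbar i) + e τ)
    (lam : ℝ) (hlam : 0 < lam)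
    (what : Fin d → ℝ)
    (hmin : ∀ w : Fin d → ℝ,
      (∑ τ, (y τ - ∑ i, x τ i * what i) ^ 2) + lam * ∑ i, |what i| ≤
        (∑ τ, (y τ - ∑ i, x τ i * w i) ^ 2) + lam * ∑ i, |w i|)
    (Sbar : Finset (Fin d)) (hSbar : ∀ i, i ∈ Sbar ↔ wbar i ≠ 0)
    (hnoise : ∀ i, |∑ τ, e τ * x τ i| ≤ lam / 4)
    (Sigmabar : Matrix (Fin d) (Fin d) ℝ)
    (hrme : 0 < restrictedMinEigenvalueSq Sigmabar Sbar.card)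
    (hclose : ∀ i j,
      |(∑ τ, x τ i * x τ j) / (t : ℝ) - Sigmabar i j| ≤
        restrictedMinEigenvalueSq Sigmabar Sbar.card / (32 * Sbar.card)) :
    ∑ i, |what i - wbar i| ≤
      8 * lam * Sbar.card / (t * restrictedMinEigenvalueSq Sigmabar Sbar.card) := by
  have hsupp : ∀ i ∉ Sbar, wbar i = 0 := fun i hi ↦ not_not.mp (mt (hSbar i).mpr hi)
  have hbasic := lasso_basic_inequality hy (hmin wbar) hsupp hlam.le hnoise
  have hq : 0 ≤ ∑ τ, (∑ i, x τ i * (what i - wbar i)) ^ 2 := sum_nonneg fun _ _ ↦ sq_nonneg _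
  have hcone := le_three_mul_of_lasso_basic hlam hq hbasic
  have hre := restrictedMinEigenvalueSq_mul_le hrme le_rfl hcone
  have hcurv := sum_sum_mul_mul_le_of_abs_sub_le hclose fun i ↦ what i - wbar i
  rw [sum_sum_mul_gram_div_mul] at hcurv
  have hcs := sq_sum_le_card_mul_sum_sq (s := Sbar) (f := fun i ↦ |what i - wbar i|)
  simp only [sq_abs] at hcs
  have hsplit := (sum_add_sum_compl Sbar fun i ↦ |what i - wbar i|).symm
  rw [hsplit] at hcurv ⊢
  have hs : (0 : ℝ) < Sbar.card := by exact_mod_cast pos_of_restrictedMinEigenvalueSq_pos hrme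
  calc _ ≤ 4 * lam * Sbar.card / (t * restrictedMinEigenvalueSq Sigmabar Sbar.card) :=
        add_le_of_lasso_inequalities hlam hrme hs t.cast_nonneg
          (sum_nonneg fun _ _ ↦ abs_nonneg _) hq hbasic hcs (hre.trans hcurv)
    _ ≤ _ := by gcongr; norm_num

/-- **ℓ₁-error bound for the Lasso estimator.**
With covariates `x_τ ∈ [−1,1]^d`, responses `y_τ = x_τᵀw̄ + e_τ`, and `ŵ_t` a minimizer of
the Lasso objective with parameter `λ > 0`, if `‖Σ_τ e_τ x_τ‖_∞ ≤ λ/4` and if `Σ̄` is a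
positive semidefinite matrix with `σ²_min(Σ̄, |S̄|) > 0` and
`‖t⁻¹ Σ_t − Σ̄‖_∞ ≤ σ²_min(Σ̄, |S̄|)/(32|S̄|)` entrywise (where `Σ_t = Σ_τ x_τ x_τᵀ` and
`S̄ = {i : w̄_i ≠ 0}`), then `‖ŵ_t − w̄‖₁ ≤ 8λ|S̄| / (t σ²_min(Σ̄, |S̄|))`. -/
theorem lasso_l1_error_bound {t d : ℕ} (hd : 1 ≤ d)
    (x : Fin t → Fin d → ℝ) (hx : ∀ τ i, |x τ i| ≤ 1)
    (wbar : Fin d → ℝ) (e : Fin t → ℝ) (y : Fin t → ℝ)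
    (hy : ∀ τ, y τ = (∑ i, x τ i * wbar i) + e τ)
    (lam : ℝ) (hlam : 0 < lam)
    (what : Fin d → ℝ)
    (hmin : ∀ w : Fin d → ℝ,
      (∑ τ, (y τ - ∑ i, x τ i * what i) ^ 2) + lam * ∑ i, |what i| ≤
        (∑ τ, (y τ - ∑ i, x τ i * w i) ^ 2) + lam * ∑ i, |w i|)
    (Sbar : Finset (Fin d)) (hSbar : ∀ i, i ∈ Sbar ↔ wbar i ≠ 0)
    (hnoise : ∀ i, |∑ τ, e τ * x τ i| ≤ lam / 4)
    (Sigmabar : Matrix (Fin d) (Fin d) ℝ) (hpsd : Sigmabar.PosSemidef)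
    (hrme : 0 < restrictedMinEigenvalueSq Sigmabar Sbar.card)
    (hclose : ∀ i j,
      |(∑ τ, x τ i * x τ j) / (t : ℝ) - Sigmabar i j| ≤
        restrictedMinEigenvalueSq Sigmabar Sbar.card / (32 * Sbar.card)) :
    ∑ i, |what i - wbar i| ≤
      8 * lam * Sbar.card / (t * restrictedMinEigenvalueSq Sigmabar Sbar.card) :=
  lasso_l1_error_bound_general x wbar e y hy lam hlam what hmin Sbar hSbar hnoise Sigmabar hrme
    hclose
end

section
/- Let X be a measurable space, A a finite nonempty set, κ a Markov kernel from X × A to X, r : X × A → [0,1] measurable, and H ∈ ℕ with H ≥ 1. Define V_{H+1}(x) := 0, Q_h(x,a) := r(x,a) + ∫ V_{h+1} dκ(x,a), and V_h(x) := max_{a ∈ A} Q_h(x,a) for h = H,…,1. On a probability space let X_1,…,X_{H+1} be X-valued and A_1,…,A_H be A-valued random variables, and let 𝓖_k be the σ-algebra generated by (X_1, A_1, …, X_k, A_k); assume that for each k ∈ {1,…,H} and every bounded measurable f : X → ℝ, E[ f(X_{k+1}) | 𝓖_k ] = ∫ f dκ(X_k, A_k) almost surely. Then for every h ∈ {1,…,H},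 E[ Σ_{k=1}^H ( V_h(X_{k+1}) − ∫ V_h dκ(X_k, A_k) )² ] ≤ 10 H². -/
/-!
Write `W k = V h (X k)` and `M k = ∫ V h dκ(X k, A k)`, so that `M k = E[W (k+1) | 𝓖 k]`.
For `Φ t = t² - 2Ht = (t - H)² - H²`, the `k`-th summand then has expectation
`E Φ(W (k+1)) - E Φ(M k)`. Bellman optimality gives `V h ≤ V (h+1) + 1`, hence `M k ≤ W k + 1`;
as `Φ` is decreasing and `2H`-Lipschitz on `[0, H]`, this yields `Φ(W k) - Φ(M k) ≤ 2H`.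
Each summand is thus at most `E Φ(W (k+1)) - E Φ(W k) + 2H`, which telescopes to
`H² + 2H² ≤ 10 H²`.
-/

open MeasureTheory ProbabilityTheory

lemma integral_le_of_forall_le {α : Type*} [MeasurableSpace α] {ν : Measure α}
    [IsProbabilityMeasure ν] {f : α → ℝ} {C : ℝ} (hf : Integrable f ν) (h : ∀ x, f x ≤ C) :
    ∫ x, f x ∂ν ≤ C :=
  (integral_mono hf (integrable_const C) h).trans_eq (by simp)

lemma integral_le_integral_add {α : Type*} [MeasurableSpace α] {ν : Measure α}
    [IsProbabilityMeasure ν] {f g : α → ℝ} {c : ℝ} (hf : Integrable f ν) (hg : Integrable g ν)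
    (hfg : ∀ x, f x ≤ g x + c) : ∫ x, f x ∂ν ≤ ∫ x, g x ∂ν + c :=
  calc ∫ x, f x ∂ν ≤ ∫ x, (g x + c) ∂ν := integral_mono hf (hg.add (integrable_const c)) hfg
    _ = ∫ x, g x ∂ν + c := by rw [integral_add hg (integrable_const c)]; simp

section Bellman

variable {X A : Type*} [MeasurableSpace X] [MeasurableSpace A]

noncomputable def bellman (κ : Kernel (X × A) X) (r : X × A → ℝ) (v : X → ℝ) (x : X) : ℝ :=
  ⨆ a, r (x, a) + ∫ x', v x' ∂κ (x, a)

variable {κ : Kernel (X × A) X} {r : X × A → ℝ} {v w : X → ℝ} {b c : ℝ}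

lemma measurable_bellman [Countable A] (hr : Measurable r) (hv : Measurable v) :
    Measurable (bellman κ r v) :=
  .iSup fun _ => (hr.comp (measurable_id.prodMk measurable_const)).add
    (hv.stronglyMeasurable.integral_kernel.measurable.comp (measurable_id.prodMk measurable_const))

lemma bellman_nonneg (hr : ∀ p, 0 ≤ r p) (hv : ∀ x, 0 ≤ v x) (x : X) : 0 ≤ bellman κ r v x :=
  Real.iSup_nonneg fun _ => add_nonneg (hr _) (integral_nonneg hv)

lemma le_bellman [Finite A] (x : X) (a : A) :
    r (x, a) + ∫ x', v x' ∂κ (x, a) ≤ bellman κ r v x :=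
  le_ciSup (f := fun a => r (x, a) + ∫ x', v x' ∂κ (x, a)) (Set.finite_range _).bddAbove a

variable [IsMarkovKernel κ]

lemma bellman_le [Nonempty A] (hr : ∀ p, r p ≤ 1) (hv : Measurable v)
    (hv_mem : ∀ x, v x ∈ Set.Icc 0 b) (x : X) : bellman κ r v x ≤ b + 1 :=
  ciSup_le fun a => by
    have := integral_le_of_forall_le (ν := κ (x, a))
      (.of_mem_Icc 0 b hv.aemeasurable (ae_of_all _ hv_mem)) fun x => (hv_mem x).2
    linarith [hr (x, a)]

lemma bellman_le_bellman_add [Nonempty A] [Finite A] (hv : ∀ p, Integrable v (κ p))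
    (hw : ∀ p, Integrable w (κ p)) (hvw : ∀ x, v x ≤ w x + c) (x : X) :
    bellman κ r v x ≤ bellman κ r w x + c :=
  ciSup_le fun a => by
    linarith [integral_le_integral_add (hv (x, a)) (hw (x, a)) hvw,
      le_bellman (κ := κ) (r := r) (v := w) x a]

structure IsOptimalValue (κ : Kernel (X × A) X) (r : X × A → ℝ) (H : ℕ) (V : ℕ → X → ℝ) :
    Prop where
  terminal : V (H + 1) = 0
  eq_bellman : ∀ h, 1 ≤ h → h ≤ H → V h = bellman κ r (V (h + 1))

namespace IsOptimalValue

variable [Nonempty A] [Finite A] {H : ℕ} {V : ℕ → X → ℝ}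

lemma measurable_and_mem_Icc (hV : IsOptimalValue κ r H V) (hr : Measurable r)
    (hr0 : ∀ p, 0 ≤ r p) (hr1 : ∀ p, r p ≤ 1) {h : ℕ} (h1 : 1 ≤ h) (hH : h ≤ H + 1) :
    Measurable (V h) ∧ ∀ x, V h x ∈ Set.Icc 0 ((H : ℝ) + 1 - h) := by
  induction hH using Nat.decreasingInduction with
  | self => simp [hV.terminal, measurable_zero]
  | of_succ k hk ih =>
    obtain ⟨hm, hmem⟩ := ih (by omega)
    rw [hV.eq_bellman k h1 (by omega)]
    refine ⟨measurable_bellman hr hm, fun x => ⟨bellman_nonneg hr0 (fun x => (hmem x).1) x, ?_⟩⟩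
    have := bellman_le (κ := κ) hr1 hm hmem x
    push_cast at this
    linarith

lemma integrable (hV : IsOptimalValue κ r H V) (hr : Measurable r)
    (hr0 : ∀ p, 0 ≤ r p) (hr1 : ∀ p, r p ≤ 1) {h : ℕ} (h1 : 1 ≤ h) (hH : h ≤ H + 1)
    (p : X × A) : Integrable (V h) (κ p) :=
  have ⟨hm, hmem⟩ := hV.measurable_and_mem_Icc hr hr0 hr1 h1 hH
  .of_mem_Icc 0 _ hm.aemeasurable (ae_of_all _ hmem)

lemma le_succ_add_one (hV : IsOptimalValue κ r H V) (hr : Measurable r)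
    (hr0 : ∀ p, 0 ≤ r p) (hr1 : ∀ p, r p ≤ 1) {h : ℕ} (h1 : 1 ≤ h) (hH : h ≤ H) (x : X) :
    V h x ≤ V (h + 1) x + 1 := by
  induction hH using Nat.decreasingInduction generalizing x with
  | self =>
    have := ((hV.measurable_and_mem_Icc hr hr0 hr1 h1 le_self_add).2 x).2
    rw [hV.terminal, Pi.zero_apply]
    linarith
  | of_succ k hk ih =>
    calc V k x = bellman κ r (V (k + 1)) x := by rw [hV.eq_bellman k h1 hk.le]
      _ ≤ bellman κ r (V (k + 1 + 1)) x + 1 :=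
        bellman_le_bellman_add (hV.integrable hr hr0 hr1 (by omega) (by omega))
          (hV.integrable hr hr0 hr1 (by omega) (by omega)) (ih (by omega)) x
      _ = V (k + 1) x + 1 := by rw [hV.eq_bellman (k + 1) (by omega) hk]

lemma integral_le_add_one (hV : IsOptimalValue κ r H V) (hr : Measurable r)
    (hr0 : ∀ p, 0 ≤ r p) (hr1 : ∀ p, r p ≤ 1) {h : ℕ} (h1 : 1 ≤ h) (hH : h ≤ H)
    (x : X) (a : A) : ∫ x', V h x' ∂κ (x, a) ≤ V h x + 1 := by
  have hstep := integral_le_integral_add (hV.integrable hr hr0 hr1 h1 (by omega) (x, a))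
    (hV.integrable hr hr0 hr1 (by omega) (by omega) (x, a)) (hV.le_succ_add_one hr hr0 hr1 h1 hH)
  have hQ := le_bellman (κ := κ) (r := r) (v := V (h + 1)) x a
  rw [← hV.eq_bellman h h1 hH] at hQ
  linarith [hr0 (x, a)]

end IsOptimalValue

end Bellman

lemma sq_sub_two_mul_sub_le {c x z : ℝ} (hx : x ∈ Set.Icc 0 c) (hz : z ∈ Set.Icc 0 c)
    (hzx : z ≤ x + 1) : (x ^ 2 - 2 * c * x) - (z ^ 2 - 2 * c * z) ≤ 2 * c := by
  obtain ⟨hx0, hxc⟩ := hx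
  obtain ⟨hz0, hzc⟩ := hz
  nlinarith [mul_nonneg (by linarith : 0 ≤ x - z + 1) (by linarith : 0 ≤ 2 * c - x - z)]

section
variable {Ω : Type*} {m mΩ : MeasurableSpace Ω} {μ : Measure[mΩ] Ω} {X Y Z : Ω → ℝ}

lemma integral_sq_sub_condExp [IsFiniteMeasure μ] (hm : m ≤ mΩ) (hY : MemLp Y 2 μ) :
    ∫ ω, (Y ω - μ[Y | m] ω) ^ 2 ∂μ = ∫ ω, Y ω ^ 2 ∂μ - ∫ ω, (μ[Y | m] ω) ^ 2 ∂μ :=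
  calc _ = ∫ ω, Var[Y; μ | m] ω ∂μ := (integral_condExp hm).symm
    _ = ∫ ω, (μ[Y ^ 2 | m] ω - (μ[Y | m] ω) ^ 2) ∂μ :=
      integral_congr_ae (condVar_ae_eq_condExp_sq_sub_sq_condExp hm hY)
    _ = _ := by
      rw [integral_sub integrable_condExp (hY.condExp one_le_two).integrable_sq,
        integral_condExp hm]
      rfl

lemma integral_sq_sub_of_condExp_ae_eq [IsFiniteMeasure μ] (hm : m ≤ mΩ) (hY : MemLp Y 2 μ)
    (hYZ : μ[Y | m] =ᵐ[μ] Z) :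
    ∫ ω, (Y ω - Z ω) ^ 2 ∂μ = ∫ ω, Y ω ^ 2 ∂μ - ∫ ω, Z ω ^ 2 ∂μ := by
  have hZ_sq : ∫ ω, Z ω ^ 2 ∂μ = ∫ ω, (μ[Y | m] ω) ^ 2 ∂μ :=
    integral_congr_ae (hYZ.mono fun ω h => by dsimp only; rw [h])
  rw [hZ_sq, ← integral_sq_sub_condExp hm hY]
  exact integral_congr_ae (hYZ.mono fun ω h => by dsimp only; rw [h])

lemma integrable_sq_sub_of_condExp_ae_eq (hY : MemLp Y 2 μ) (hYZ : μ[Y | m] =ᵐ[μ] Z) :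
    Integrable (fun ω => (Y ω - Z ω) ^ 2) μ :=
  (hY.sub ((hY.condExp one_le_two).ae_eq hYZ)).integrable_sq

variable [IsProbabilityMeasure μ] {c : ℝ}

lemma integral_sq_sub_le_of_condExp_ae_eq (hm : m ≤ mΩ) (hX : Measurable X) (hY : Measurable Y)
    (hX_mem : ∀ ω, X ω ∈ Set.Icc 0 c) (hY_mem : ∀ ω, Y ω ∈ Set.Icc 0 c)
    (hZ_mem : ∀ ω, Z ω ∈ Set.Icc 0 c) (hZX : ∀ ω, Z ω ≤ X ω + 1) (hYZ : μ[Y | m] =ᵐ[μ] Z) :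
    ∫ ω, (Y ω - Z ω) ^ 2 ∂μ ≤
      ∫ ω, (Y ω ^ 2 - 2 * c * Y ω) ∂μ - ∫ ω, (X ω ^ 2 - 2 * c * X ω) ∂μ + 2 * c := by
  have hXL2 : MemLp X 2 μ := memLp_of_bounded (ae_of_all _ hX_mem) hX.aestronglyMeasurable 2
  have hYL2 : MemLp Y 2 μ := memLp_of_bounded (ae_of_all _ hY_mem) hY.aestronglyMeasurable 2
  have hZL2 : MemLp Z 2 μ := (hYL2.condExp one_le_two).ae_eq hYZ
  have hmean : ∫ ω, Z ω ∂μ = ∫ ω, Y ω ∂μ := by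
    rw [← integral_congr_ae hYZ, integral_condExp hm]
  have expand : ∀ {U : Ω → ℝ}, MemLp U 2 μ →
      ∫ ω, (U ω ^ 2 - 2 * c * U ω) ∂μ = ∫ ω, U ω ^ 2 ∂μ - 2 * c * ∫ ω, U ω ∂μ := fun hU => by
    rw [integral_sub hU.integrable_sq ((hU.integrable one_le_two).const_mul _), integral_const_mul]
  have hgap : ∫ ω, (X ω ^ 2 - 2 * c * X ω) ∂μ - ∫ ω, (Z ω ^ 2 - 2 * c * Z ω) ∂μ ≤ 2 * c := by
    have hφ : ∀ {U : Ω → ℝ}, MemLp U 2 μ → Integrable (fun ω => U ω ^ 2 - 2 * c * U ω) μ :=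
      fun hU => hU.integrable_sq.sub ((hU.integrable one_le_two).const_mul _)
    rw [← integral_sub (hφ hXL2) (hφ hZL2)]
    exact integral_le_of_forall_le ((hφ hXL2).sub (hφ hZL2))
      fun ω => sq_sub_two_mul_sub_le (hX_mem ω) (hZ_mem ω) (hZX ω)
  rw [expand hZL2, hmean] at hgap
  rw [expand hYL2, integral_sq_sub_of_condExp_ae_eq hm hYL2 hYZ]
  linarith

lemma integral_sum_sq_sub_le_of_condExp_ae_eq {W M : ℕ → Ω → ℝ} {G : ℕ → MeasurableSpace Ω}
    {n : ℕ} (hG : ∀ k ∈ Finset.Icc 1 n, G k ≤ mΩ) (hW : ∀ k, Measurable (W k))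
    (hW_mem : ∀ k ω, W k ω ∈ Set.Icc 0 c)
    (hM_mem : ∀ k ∈ Finset.Icc 1 n, ∀ ω, M k ω ∈ Set.Icc 0 c)
    (hMW : ∀ k ∈ Finset.Icc 1 n, ∀ ω, M k ω ≤ W k ω + 1)
    (hWM : ∀ k ∈ Finset.Icc 1 n, μ[W (k + 1) | G k] =ᵐ[μ] M k) :
    ∫ ω, ∑ k ∈ Finset.Icc 1 n, (W (k + 1) ω - M k ω) ^ 2 ∂μ ≤ c ^ 2 + 2 * c * n := by
  set a : ℕ → ℝ := fun k => ∫ ω, (W k ω ^ 2 - 2 * c * W k ω) ∂μ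
  have hWL2 (k : ℕ) : MemLp (W k) 2 μ :=
    memLp_of_bounded (ae_of_all _ (hW_mem k)) (hW k).aestronglyMeasurable 2
  have ha_le (k : ℕ) : a k ≤ 0 := integral_nonpos fun ω => by
    obtain ⟨h0, hc⟩ := hW_mem k ω
    change W k ω ^ 2 - 2 * c * W k ω ≤ 0
    nlinarith
  have ha_ge (k : ℕ) : -c ^ 2 ≤ a k :=
    calc -c ^ 2 = ∫ _, -c ^ 2 ∂μ := by simp
      _ ≤ a k := integral_mono (integrable_const _)
          ((hWL2 k).integrable_sq.sub (((hWL2 k).integrable one_le_two).const_mul _))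
          fun ω => by nlinarith [sq_nonneg (W k ω - c)]
  calc ∫ ω, ∑ k ∈ Finset.Icc 1 n, (W (k + 1) ω - M k ω) ^ 2 ∂μ
      = ∑ k ∈ Finset.Icc 1 n, ∫ ω, (W (k + 1) ω - M k ω) ^ 2 ∂μ :=
        integral_finsetSum _ fun k hk => integrable_sq_sub_of_condExp_ae_eq (hWL2 _) (hWM k hk)
    _ ≤ ∑ k ∈ Finset.Icc 1 n, (a (k + 1) - a k + 2 * c) :=
        Finset.sum_le_sum fun k hk => integral_sq_sub_le_of_condExp_ae_eq (hG k hk) (hW k)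
          (hW (k + 1)) (hW_mem k) (hW_mem (k + 1)) (hM_mem k hk) (hMW k hk) (hWM k hk)
    _ = a (n + 1) - a 1 + 2 * c * n := by
        rw [Finset.sum_add_distrib, ← Finset.Ico_add_one_right_eq_Icc,
          Finset.sum_Ico_sub _ (by omega), Finset.sum_const, Nat.card_Ico, add_tsub_cancel_right,
          nsmul_eq_mul]
        ring
    _ ≤ c ^ 2 + 2 * c * n := by linarith [ha_le (n + 1), ha_ge 1]
end

theorem optimal_value_variance_bound_general
    {X : Type*} [MeasurableSpace X] {A : Type*} [MeasurableSpace A] [Fintype A] [Nonempty A]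
    (κ : Kernel (X × A) X) [IsMarkovKernel κ]
    (r : X × A → ℝ) (hr_meas : Measurable r)
    (hr0 : ∀ p, 0 ≤ r p) (hr1 : ∀ p, r p ≤ 1)
    (H : ℕ)
    (V : ℕ → X → ℝ) (Q : ℕ → X → A → ℝ)
    (hVtop : ∀ x, V (H + 1) x = 0)
    (hQ : ∀ h, 1 ≤ h → h ≤ H → ∀ x a,
      Q h x a = r (x, a) + ∫ x', V (h + 1) x' ∂(κ (x, a)))
    (hV : ∀ h, 1 ≤ h → h ≤ H → ∀ x, V h x = ⨆ a : A, Q h x a)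
    {Ω : Type*} [mΩ : MeasurableSpace Ω] (μ : Measure Ω) [IsProbabilityMeasure μ]
    (Xs : ℕ → Ω → X) (As : ℕ → Ω → A)
    (hXmeas : ∀ k, Measurable (Xs k)) (hAmeas : ∀ k, Measurable (As k))
    (G : ℕ → MeasurableSpace Ω)
    (hG : ∀ k, G k = ⨆ j ∈ Finset.Icc 1 k,
      (MeasurableSpace.comap (Xs j) inferInstance ⊔ MeasurableSpace.comap (As j) inferInstance))
    (hcond : ∀ k, 1 ≤ k → k ≤ H → ∀ f : X → ℝ, Measurable f → (∃ C, ∀ x, |f x| ≤ C) →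
      μ[(fun ω => f (Xs (k + 1) ω)) | G k] =ᵐ[μ]
        fun ω => ∫ x', f x' ∂(κ (Xs k ω, As k ω))) :
    ∀ h, 1 ≤ h → h ≤ H →
      ∫ ω, (∑ k ∈ Finset.Icc 1 H,
        (V h (Xs (k + 1) ω) - ∫ x', V h x' ∂(κ (Xs k ω, As k ω))) ^ 2) ∂μ ≤
        10 * (H : ℝ) ^ 2 := by
  intro h hh1 hhH
  have hOpt : IsOptimalValue κ r H V :=
    ⟨funext hVtop, fun h h1 h2 => funext fun x => (hV h h1 h2 x).trans (iSup_congr (hQ h h1 h2 x))⟩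
  obtain ⟨hVm, hV_mem⟩ := hOpt.measurable_and_mem_Icc hr_meas hr0 hr1 hh1 (by omega)
  have hVH (x : X) : V h x ∈ Set.Icc 0 (H : ℝ) := by
    have : (1 : ℝ) ≤ h := by exact_mod_cast hh1
    exact ⟨(hV_mem x).1, by linarith [(hV_mem x).2]⟩
  have hGle (k : ℕ) : G k ≤ mΩ :=
    hG k ▸ iSup₂_le fun j _ => sup_le (hXmeas j).comap_le (hAmeas j).comap_le
  have hMH (k : ℕ) (ω : Ω) : ∫ x', V h x' ∂κ (Xs k ω, As k ω) ∈ Set.Icc 0 (H : ℝ) :=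
    ⟨integral_nonneg fun x => (hVH x).1, integral_le_of_forall_le
      (hOpt.integrable hr_meas hr0 hr1 hh1 (by omega) _) fun x => (hVH x).2⟩
  calc _ ≤ (H : ℝ) ^ 2 + 2 * H * H :=
        integral_sum_sq_sub_le_of_condExp_ae_eq (fun k _ => hGle k)
          (fun k => hVm.comp (hXmeas k)) (fun k ω => hVH (Xs k ω)) (fun k _ => hMH k)
          (fun k _ ω => hOpt.integral_le_add_one hr_meas hr0 hr1 hh1 hhH _ _)
          fun k hk => hcond k (Finset.mem_Icc.1 hk).1 (Finset.mem_Icc.1 hk).2 (V h) hVm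
            ⟨H, fun x => abs_le.2 ⟨by linarith [(hVH x).1], (hVH x).2⟩⟩
    _ ≤ 10 * (H : ℝ) ^ 2 := by nlinarith [sq_nonneg (H : ℝ)]

/-- **Bound on the cumulative conditional variance of a fixed optimal value function.**
With optimal value functions `V_h` of a homogeneous finite-horizon MDP defined by the
Bellman optimality recursion, and a trajectory `X_1, A_1, …, X_H, A_H, X_{H+1}` generated
by an arbitrary adapted policy, so that the conditional law of `X_{k+1}` given the past is
`κ(X_k, A_k)`, one has, for every `h ∈ {1,…,H}`,
`E[Σ_{k=1}^H (V_h(X_{k+1}) − ∫ V_h dκ(X_k, A_k))²] ≤ 10 H²`. -/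
theorem optimal_value_variance_bound
    {X : Type*} [MeasurableSpace X] {A : Type*} [MeasurableSpace A] [Fintype A] [Nonempty A]
    (κ : Kernel (X × A) X) [IsMarkovKernel κ]
    (r : X × A → ℝ) (hr_meas : Measurable r)
    (hr0 : ∀ p, 0 ≤ r p) (hr1 : ∀ p, r p ≤ 1)
    (H : ℕ) (hH : 1 ≤ H)
    (V : ℕ → X → ℝ) (Q : ℕ → X → A → ℝ)
    (hVtop : ∀ x, V (H + 1) x = 0)
    (hQ : ∀ h, 1 ≤ h → h ≤ H → ∀ x a,
      Q h x a = r (x, a) + ∫ x', V (h + 1) x' ∂(κ (x, a)))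
    (hV : ∀ h, 1 ≤ h → h ≤ H → ∀ x, V h x = ⨆ a : A, Q h x a)
    {Ω : Type*} [mΩ : MeasurableSpace Ω] (μ : Measure Ω) [IsProbabilityMeasure μ]
    (Xs : ℕ → Ω → X) (As : ℕ → Ω → A)
    (hXmeas : ∀ k, Measurable (Xs k)) (hAmeas : ∀ k, Measurable (As k))
    (G : ℕ → MeasurableSpace Ω)
    (hG : ∀ k, G k = ⨆ j ∈ Finset.Icc 1 k,
      (MeasurableSpace.comap (Xs j) inferInstance ⊔ MeasurableSpace.comap (As j) inferInstance))
    (hcond : ∀ k, 1 ≤ k → k ≤ H → ∀ f : X → ℝ, Measurable f → (∃ C, ∀ x, |f x| ≤ C) →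
      μ[(fun ω => f (Xs (k + 1) ω)) | G k] =ᵐ[μ]
        fun ω => ∫ x', f x' ∂(κ (Xs k ω, As k ω))) :
    ∀ h, 1 ≤ h → h ≤ H →
      ∫ ω, (∑ k ∈ Finset.Icc 1 H,
        (V h (Xs (k + 1) ω) - ∫ x', V h x' ∂(κ (Xs k ω, As k ω))) ^ 2) ∂μ ≤
        10 * (H : ℝ) ^ 2 :=
  optimal_value_variance_bound_general κ r hr_meas hr0 hr1 H V Q hVtop hQ hV (mΩ := mΩ) μ Xs As
    hXmeas hAmeas G hG hcond
end

section
/- Let X be a measurable space, A a finite nonempty set with |A| elements, κ a Markov kernel from X × A to X, φ : X × A → [−1,1]^d measurable, P₀ a probability measure on X, and H ∈ ℕ with H ≥ 1. A Markov policy π assigns to each x ∈ X a probability mass function π(x,·) on A, measurably in x; under π, the trajectory (X_1, A_1, …, X_H, A_H) has the law determined by X_1 ∼ P₀, A_h | X_h ∼ π(X_h, ·), and X_{h+1} ∼ κ(X_h, A_h), and Σ(π) := E^π[ (1/H) Σ_{h=1}^H φ(X_h, A_h) φ(X_h, A_h)ᵀ ]. Let π^U be the uniform policy π^U(x,a) =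 1/|A|, and let π^E be any Markov policy; set c := sup_{x ∈ X, a ∈ A} π^E(x,a) · |A| and assume c < ∞. Then Σ(π^E) ⪯ c^H · Σ(π^U) in the positive semidefinite order; consequently, for every s ∈ {1,…,d}, σ²_min(Σ(π^U), s) ≥ c^{−H} · σ²_min(Σ(π^E), s), and since c ≥ 1 also σ_min(Σ(π^U), s) ≥ c^{−H} · σ_min(Σ(π^E), s) where σ_min denotes the square root of σ²_min. -/
open MeasureTheory ProbabilityTheory

/-- `gramRec κ φ π h x i j` is the `(i,j)` entry of
`E^π[ Σ_{t=1}^{h} φ(X_t, A_t) φ(X_t, A_t)ᵀ | X_1 = x ]`, the expected cumulative Gram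
matrix of feature vectors over `h` steps of the MDP with transition kernel `κ` started at
`x`, under the Markov policy `π`, defined by iterated integration of the kernels. -/
noncomputable def gramRec {X : Type*} [MeasurableSpace X] {A : Type*} [MeasurableSpace A]
    [Fintype A] {d : ℕ} (κ : Kernel (X × A) X) (φ : X → A → Fin d → ℝ)
    (π : X → A → ℝ) : ℕ → X → Fin d → Fin d → ℝ
  | 0, _, _, _ => 0
  | h + 1, x, i, j => ∑ a, π x a *
      (φ x a i * φ x a j + ∫ x', gramRec κ φ π h x' i j ∂(κ (x, a)))

/-!
Write `Q_π(h, x) = βᵀ G_π(h, x) β` for the quadratic form of the `h`-step Gram matrix of a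
trajectory started at `x`. Unrolling one step,
`Q_π(h+1, x) = Σ_a π(x,a) ((β ⬝ φ(x,a))² + E_{x' ∼ κ(x,a)} Q_π(h, x'))`,
a sum of nonnegative terms. As `π^E(x,a) ≤ c π^U(x,a)` and `c ≥ 1` (both policies sum to one),
induction on `h` gives `Q_{π^E}(h, x) ≤ c^h Q_{π^U}(h, x)`, hence `Σ(π^E) ⪯ c^H Σ(π^U)`.
The restricted eigenvalue is an infimum of quotients `βᵀMβ / ‖β_I‖²` over a set of pairs
`(I, β)` that does not depend on `M`, so it inherits the comparison.
-/

namespace Matrix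

variable {ι : Type*} [Fintype ι]

def quadForm (β : ι → ℝ) : Matrix ι ι ℝ →ₗ[ℝ] ℝ where
  toFun M := ∑ i, ∑ j, β i * M i j * β j
  map_add' M N := by simp only [add_apply, mul_add, add_mul, Finset.sum_add_distrib]
  map_smul' r M := by
    simp only [smul_apply, smul_eq_mul, Finset.mul_sum, RingHom.id_apply]
    exact Finset.sum_congr rfl fun i _ => Finset.sum_congr rfl fun j _ => by ring

theorem quadForm_apply (β : ι → ℝ) (M : Matrix ι ι ℝ) :
    quadForm β M = ∑ i, ∑ j, β i * M i j * β j := rfl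

theorem quadForm_vecMulVec_self (β u : ι → ℝ) : quadForm β (vecMulVec u u) = (β ⬝ᵥ u) ^ 2 := by
  simp only [quadForm_apply, vecMulVec_apply, dotProduct, sq, Finset.sum_mul_sum]
  exact Finset.sum_congr rfl fun i _ => Finset.sum_congr rfl fun j _ => by ring

theorem integrable_quadForm {α : Type*} [MeasurableSpace α] {μ : Measure α}
    {F : α → Matrix ι ι ℝ} (hF : ∀ i j, Integrable (fun x => F x i j) μ) (β : ι → ℝ) :
    Integrable (fun x => quadForm β (F x)) μ :=
  integrable_finsetSum _ fun i _ => integrable_finsetSum _ fun j _ =>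
    ((hF i j).const_mul (β i)).mul_const (β j)

theorem integral_quadForm {α : Type*} [MeasurableSpace α] {μ : Measure α}
    {F : α → Matrix ι ι ℝ} (hF : ∀ i j, Integrable (fun x => F x i j) μ) (β : ι → ℝ) :
    ∫ x, quadForm β (F x) ∂μ = quadForm β (of fun i j => ∫ x, F x i j ∂μ) := by
  have hint : ∀ i j, Integrable (fun x => β i * F x i j * β j) μ := fun i j =>
    ((hF i j).const_mul (β i)).mul_const (β j)
  simp only [quadForm_apply]
  rw [integral_finsetSum _ fun i _ => integrable_finsetSum _ fun j _ => hint i j]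
  refine Finset.sum_congr rfl fun i _ => ?_
  rw [integral_finsetSum _ fun j _ => hint i j]
  exact Finset.sum_congr rfl fun j _ => by rw [integral_mul_const, integral_const_mul]; rfl

end Matrix

open Matrix

section MarkovPolicy

variable {X : Type*} [MeasurableSpace X] {A : Type*} [Fintype A]

structure IsMarkovPolicy (π : X → A → ℝ) : Prop where
  measurable : ∀ a, Measurable fun x => π x a
  nonneg : ∀ x a, 0 ≤ π x a
  sum_eq_one : ∀ x, ∑ a, π x a = 1

theorem isMarkovPolicy_uniform [Nonempty A] :
    IsMarkovPolicy fun (_ : X) (_ : A) => 1 / (Fintype.card A : ℝ) where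
  measurable _ := measurable_const
  nonneg _ _ := by positivity
  sum_eq_one _ := by simp

theorem IsMarkovPolicy.one_le_of_le_mul {π π' : X → A → ℝ} (hπ : IsMarkovPolicy π)
    (hπ' : IsMarkovPolicy π') {c : ℝ} {x : X} (hc : ∀ a, π x a ≤ c * π' x a) : 1 ≤ c := by
  calc 1 = ∑ a, π x a := (hπ.sum_eq_one x).symm
    _ ≤ ∑ a, c * π' x a := Finset.sum_le_sum fun a _ => hc a
    _ = c := by rw [← Finset.mul_sum, hπ'.sum_eq_one x, mul_one]

end MarkovPolicy

section GramRec

variable {X : Type*} [MeasurableSpace X] {A : Type*} [MeasurableSpace A] [Fintype A] {d : ℕ}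
  (κ : Kernel (X × A) X) (φ : X → A → Fin d → ℝ) {π : X → A → ℝ}

@[simp]
theorem gramRec_zero (x : X) : gramRec κ φ π 0 x = (0 : Matrix (Fin d) (Fin d) ℝ) := rfl

theorem gramRec_succ (h : ℕ) (x : X) :
    (gramRec κ φ π (h + 1) x : Matrix (Fin d) (Fin d) ℝ) = ∑ a, π x a •
      (vecMulVec (φ x a) (φ x a) + of fun i j => ∫ x', gramRec κ φ π h x' i j ∂κ (x, a)) := by
  ext i j
  simp only [gramRec, Matrix.sum_apply, Matrix.smul_apply, Matrix.add_apply, vecMulVec_apply,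
    of_apply, smul_eq_mul]

theorem measurable_gramRec (hπ : ∀ a, Measurable fun x => π x a)
    (hφ : ∀ a i, Measurable fun x => φ x a i) (h : ℕ) (i j : Fin d) :
    Measurable fun x => gramRec κ φ π h x i j := by
  induction h generalizing i j with
  | zero => exact measurable_const
  | succ h ih =>
    have hint : Measurable fun p : X × A => ∫ x', gramRec κ φ π h x' i j ∂κ p :=
      ((ih i j).stronglyMeasurable.integral_kernel).measurable
    exact Finset.measurable_sum _ fun a _ =>
      (hπ a).mul (((hφ a i).mul (hφ a j)).add (hint.comp (measurable_id.prodMk measurable_const)))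

theorem abs_gramRec_le [IsMarkovKernel κ] (hπ0 : ∀ x a, 0 ≤ π x a) (hπ1 : ∀ x, ∑ a, π x a = 1)
    {B : ℝ} (hφ : ∀ x a i, |φ x a i| ≤ B) (h : ℕ) (x : X) (i j : Fin d) :
    |gramRec κ φ π h x i j| ≤ h * B ^ 2 := by
  induction h generalizing x with
  | zero => simp [gramRec]
  | succ h ih =>
    have hstep : ∀ a, |φ x a i * φ x a j + ∫ x', gramRec κ φ π h x' i j ∂κ (x, a)| ≤
        (h + 1) * B ^ 2 := fun a => by
      have hφφ : |φ x a i * φ x a j| ≤ B ^ 2 := by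
        rw [abs_mul, sq]
        exact mul_le_mul (hφ x a i) (hφ x a j) (abs_nonneg _) ((abs_nonneg _).trans (hφ x a i))
      have hI : |∫ x', gramRec κ φ π h x' i j ∂κ (x, a)| ≤ h * B ^ 2 := by
        simpa using norm_integral_le_of_norm_le_const (μ := κ (x, a))
          (f := fun x' => gramRec κ φ π h x' i j) (ae_of_all _ fun x' => ih x')
      linarith [abs_add_le (φ x a i * φ x a j) (∫ x', gramRec κ φ π h x' i j ∂κ (x, a))]
    calc |gramRec κ φ π (h + 1) x i j|
        ≤ ∑ a, π x a * |φ x a i * φ x a j + ∫ x', gramRec κ φ π h x' i j ∂κ (x, a)| := by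
          refine (Finset.abs_sum_le_sum_abs _ _).trans (le_of_eq ?_)
          simp only [abs_mul, abs_of_nonneg (hπ0 x _)]
      _ ≤ ∑ a, π x a * ((h + 1) * B ^ 2) :=
          Finset.sum_le_sum fun a _ => mul_le_mul_of_nonneg_left (hstep a) (hπ0 x a)
      _ = ((h + 1 : ℕ) : ℝ) * B ^ 2 := by rw [← Finset.sum_mul, hπ1 x, one_mul]; push_cast; rfl

theorem integrable_gramRec [IsMarkovKernel κ] (hπ : IsMarkovPolicy π)
    (hφm : ∀ a i, Measurable fun x => φ x a i) {B : ℝ} (hφb : ∀ x a i, |φ x a i| ≤ B)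
    (h : ℕ) (i j : Fin d) (μ : Measure X) [IsFiniteMeasure μ] :
    Integrable (fun x => gramRec κ φ π h x i j) μ :=
  .of_bound (measurable_gramRec κ φ hπ.measurable hφm h i j).aestronglyMeasurable (h * B ^ 2)
    (ae_of_all _ fun x => abs_gramRec_le κ φ hπ.nonneg hπ.sum_eq_one hφb h x i j)

end GramRec

section QuadForm

variable {X : Type*} [MeasurableSpace X] {A : Type*} [MeasurableSpace A] [Fintype A] {d : ℕ}
  (κ : Kernel (X × A) X) [IsMarkovKernel κ] {φ : X → A → Fin d → ℝ}

theorem quadForm_gramRec_succ {π : X → A → ℝ} (hπ : IsMarkovPolicy π)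
    (hφm : ∀ a i, Measurable fun x => φ x a i) {B : ℝ} (hφb : ∀ x a i, |φ x a i| ≤ B)
    (β : Fin d → ℝ) (h : ℕ) (x : X) :
    quadForm β (gramRec κ φ π (h + 1) x) =
      ∑ a, π x a * ((β ⬝ᵥ φ x a) ^ 2 + ∫ x', quadForm β (gramRec κ φ π h x') ∂κ (x, a)) := by
  rw [gramRec_succ, map_sum]
  refine Finset.sum_congr rfl fun a _ => ?_
  rw [map_smul, map_add, quadForm_vecMulVec_self, smul_eq_mul,
    integral_quadForm fun i j => integrable_gramRec κ φ hπ hφm hφb h i j _]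

theorem integrable_quadForm_gramRec {π : X → A → ℝ} (hπ : IsMarkovPolicy π)
    (hφm : ∀ a i, Measurable fun x => φ x a i) {B : ℝ} (hφb : ∀ x a i, |φ x a i| ≤ B)
    (β : Fin d → ℝ) (h : ℕ) (μ : Measure X) [IsFiniteMeasure μ] :
    Integrable (fun x => quadForm β (gramRec κ φ π h x)) μ :=
  integrable_quadForm (fun i j => integrable_gramRec κ φ hπ hφm hφb h i j μ) β

theorem quadForm_gramRec_nonneg {π : X → A → ℝ} (hπ : IsMarkovPolicy π)
    (hφm : ∀ a i, Measurable fun x => φ x a i) {B : ℝ} (hφb : ∀ x a i, |φ x a i| ≤ B)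
    (β : Fin d → ℝ) (h : ℕ) (x : X) :
    0 ≤ quadForm β (gramRec κ φ π h x) := by
  induction h generalizing x with
  | zero => rw [gramRec_zero, map_zero]
  | succ h ih =>
    rw [quadForm_gramRec_succ κ hπ hφm hφb]
    exact Finset.sum_nonneg fun a _ =>
      mul_nonneg (hπ.nonneg x a) (add_nonneg (sq_nonneg _) (integral_nonneg ih))

theorem quadForm_gramRec_le_pow_mul {πE πU : X → A → ℝ} (hE : IsMarkovPolicy πE)
    (hU : IsMarkovPolicy πU) (hφm : ∀ a i, Measurable fun x => φ x a i) {B : ℝ}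
    (hφb : ∀ x a i, |φ x a i| ≤ B) {c : ℝ} (hc1 : 1 ≤ c) (hc : ∀ x a, πE x a ≤ c * πU x a)
    (β : Fin d → ℝ) (h : ℕ) (x : X) :
    quadForm β (gramRec κ φ πE h x) ≤ c ^ h * quadForm β (gramRec κ φ πU h x) := by
  induction h generalizing x with
  | zero => rw [gramRec_zero, gramRec_zero, map_zero, mul_zero]
  | succ h ih =>
    have hnext : ∀ a, ∫ x', quadForm β (gramRec κ φ πE h x') ∂κ (x, a) ≤
        c ^ h * ∫ x', quadForm β (gramRec κ φ πU h x') ∂κ (x, a) := fun a => by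
      rw [← integral_const_mul]
      exact integral_mono (integrable_quadForm_gramRec κ hE hφm hφb β h _)
        ((integrable_quadForm_gramRec κ hU hφm hφb β h _).const_mul _) ih
    have hch : 1 ≤ c ^ h := one_le_pow₀ hc1
    rw [quadForm_gramRec_succ κ hE hφm hφb, quadForm_gramRec_succ κ hU hφm hφb, Finset.mul_sum]
    refine Finset.sum_le_sum fun a _ => ?_
    have hQU : 0 ≤ ∫ x', quadForm β (gramRec κ φ πU h x') ∂κ (x, a) :=
      integral_nonneg fun x' => quadForm_gramRec_nonneg κ hU hφm hφb β h x'
    have hstep : (β ⬝ᵥ φ x a) ^ 2 + ∫ x', quadForm β (gramRec κ φ πE h x') ∂κ (x, a) ≤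
        c ^ h * ((β ⬝ᵥ φ x a) ^ 2 + ∫ x', quadForm β (gramRec κ φ πU h x') ∂κ (x, a)) := by
      nlinarith [hnext a, mul_le_mul_of_nonneg_right hch (sq_nonneg (β ⬝ᵥ φ x a))]
    calc πE x a * ((β ⬝ᵥ φ x a) ^ 2 + ∫ x', quadForm β (gramRec κ φ πE h x') ∂κ (x, a))
        ≤ c * πU x a * (c ^ h * ((β ⬝ᵥ φ x a) ^ 2 +
            ∫ x', quadForm β (gramRec κ φ πU h x') ∂κ (x, a))) :=
          (mul_le_mul_of_nonneg_left hstep (hE.nonneg x a)).trans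
            (mul_le_mul_of_nonneg_right (hc x a)
              (mul_nonneg (zero_le_one.trans hch) (add_nonneg (sq_nonneg _) hQU)))
      _ = c ^ (h + 1) * (πU x a * ((β ⬝ᵥ φ x a) ^ 2 +
            ∫ x', quadForm β (gramRec κ φ πU h x') ∂κ (x, a))) := by ring

end QuadForm

section ExpectedGram

variable {X : Type*} [MeasurableSpace X] {A : Type*} [MeasurableSpace A] [Fintype A] {d : ℕ}

/-- The matrix `Σ(π) = E^π[(1/H) Σ_{h=1}^H φ(X_h, A_h) φ(X_h, A_h)ᵀ]` with `X_1 ∼ P₀`. -/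
noncomputable def expectedGram (κ : Kernel (X × A) X) (φ : X → A → Fin d → ℝ) (π : X → A → ℝ)
    (P₀ : Measure X) (H : ℕ) : Matrix (Fin d) (Fin d) ℝ :=
  (1 / H : ℝ) • of fun i j => ∫ x, gramRec κ φ π H x i j ∂P₀

variable (κ : Kernel (X × A) X) [IsMarkovKernel κ] {φ : X → A → Fin d → ℝ}
  (P₀ : Measure X) [IsFiniteMeasure P₀] (H : ℕ)

theorem quadForm_expectedGram {π : X → A → ℝ} (hπ : IsMarkovPolicy π)
    (hφm : ∀ a i, Measurable fun x => φ x a i) {B : ℝ} (hφb : ∀ x a i, |φ x a i| ≤ B)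
    (β : Fin d → ℝ) :
    quadForm β (expectedGram κ φ π P₀ H) =
      (1 / H : ℝ) * ∫ x, quadForm β (gramRec κ φ π H x) ∂P₀ := by
  rw [expectedGram, map_smul, smul_eq_mul,
    integral_quadForm fun i j => integrable_gramRec κ φ hπ hφm hφb H i j P₀]

theorem quadForm_expectedGram_nonneg {π : X → A → ℝ} (hπ : IsMarkovPolicy π)
    (hφm : ∀ a i, Measurable fun x => φ x a i) {B : ℝ} (hφb : ∀ x a i, |φ x a i| ≤ B)
    (β : Fin d → ℝ) : 0 ≤ quadForm β (expectedGram κ φ π P₀ H) := by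
  rw [quadForm_expectedGram κ P₀ H hπ hφm hφb]
  exact mul_nonneg (by positivity)
    (integral_nonneg fun x => quadForm_gramRec_nonneg κ hπ hφm hφb β H x)

theorem quadForm_expectedGram_le_pow_mul {πE πU : X → A → ℝ} (hE : IsMarkovPolicy πE)
    (hU : IsMarkovPolicy πU) (hφm : ∀ a i, Measurable fun x => φ x a i) {B : ℝ}
    (hφb : ∀ x a i, |φ x a i| ≤ B) {c : ℝ} (hc1 : 1 ≤ c) (hc : ∀ x a, πE x a ≤ c * πU x a)
    (β : Fin d → ℝ) :
    quadForm β (expectedGram κ φ πE P₀ H) ≤ c ^ H * quadForm β (expectedGram κ φ πU P₀ H) := by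
  rw [quadForm_expectedGram κ P₀ H hE hφm hφb, quadForm_expectedGram κ P₀ H hU hφm hφb,
    mul_left_comm]
  refine mul_le_mul_of_nonneg_left ?_ (by positivity)
  rw [← integral_const_mul]
  exact integral_mono (integrable_quadForm_gramRec κ hE hφm hφb β H P₀)
    ((integrable_quadForm_gramRec κ hU hφm hφb β H P₀).const_mul _)
    (quadForm_gramRec_le_pow_mul κ hE hU hφm hφb hc1 hc β H)

end ExpectedGram

section RestrictedEigenvalue

variable {d : ℕ}

theorem restrictedMinEigenvalueSq_nonneg {M : Matrix (Fin d) (Fin d) ℝ}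
    (hM : ∀ β, 0 ≤ quadForm β M) (s : ℕ) : 0 ≤ restrictedMinEigenvalueSq M s :=
  Real.sInf_nonneg fun _ ⟨_, β, _, _, _, hv⟩ =>
    hv ▸ div_nonneg (hM β) (Finset.sum_nonneg fun _ _ => sq_nonneg _)

theorem inv_mul_restrictedMinEigenvalueSq_le {M N : Matrix (Fin d) (Fin d) ℝ} {C : ℝ}
    (hC : 0 < C) (hM : ∀ β, 0 ≤ quadForm β M) (hMN : ∀ β, quadForm β M ≤ C * quadForm β N)
    (s : ℕ) : C⁻¹ * restrictedMinEigenvalueSq M s ≤ restrictedMinEigenvalueSq N s := by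
  rcases Set.eq_empty_or_nonempty {v : ℝ | ∃ (I : Finset (Fin d)) (β : Fin d → ℝ),
      I.card ≤ s ∧ (∃ i ∈ I, β i ≠ 0) ∧ (∑ i ∈ Iᶜ, |β i|) ≤ 3 * ∑ i ∈ I, |β i| ∧
      v = quadForm β N / ∑ i ∈ I, β i ^ 2} with hN | hN
  · -- the admissible pairs `(I, β)` do not depend on the matrix
    have hσM : restrictedMinEigenvalueSq M s ≤ 0 :=
      Real.sInf_nonpos fun _ ⟨I, β, hI, hβ, hcone, _⟩ =>
        (hN.subset ⟨I, β, hI, hβ, hcone, rfl⟩).elim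
    have hσN : restrictedMinEigenvalueSq N s = 0 := (congrArg sInf hN).trans Real.sInf_empty
    rw [hσN]
    exact mul_nonpos_of_nonneg_of_nonpos (inv_nonneg.2 hC.le) hσM
  · refine le_csInf hN fun _ ⟨I, β, hI, ⟨i, hi, hβi⟩, hcone, hv⟩ => hv ▸ ?_
    have hnorm : 0 < ∑ i ∈ I, β i ^ 2 :=
      Finset.sum_pos' (fun _ _ => sq_nonneg _) ⟨i, hi, by positivity⟩
    have hσM : restrictedMinEigenvalueSq M s ≤ quadForm β M / ∑ i ∈ I, β i ^ 2 :=
      csInf_le ⟨0, fun _ ⟨_, β', _, _, _, hv'⟩ =>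
        hv' ▸ div_nonneg (hM β') (Finset.sum_nonneg fun _ _ => sq_nonneg _)⟩
        ⟨I, β, hI, ⟨i, hi, hβi⟩, hcone, rfl⟩
    rw [inv_mul_le_iff₀ hC, ← mul_div_assoc]
    exact hσM.trans (div_le_div_of_nonneg_right (hMN β) hnorm.le)

end RestrictedEigenvalue

theorem mul_sqrt_le_sqrt_of_mul_le {t a b : ℝ} (ht0 : 0 ≤ t) (ht1 : t ≤ 1) (ha : 0 ≤ a)
    (h : t * a ≤ b) : t * √a ≤ √b :=
  calc t * √a = √(t ^ 2 * a) := by rw [Real.sqrt_mul (sq_nonneg t), Real.sqrt_sq ht0]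
    _ ≤ √b := Real.sqrt_le_sqrt <| le_trans (by nlinarith [mul_nonneg ht0 ha]) h

theorem uniform_policy_exploratory_general
    {X : Type*} [MeasurableSpace X] {A : Type*} [MeasurableSpace A] [Fintype A] [Nonempty A]
    {d : ℕ}
    (κ : Kernel (X × A) X) [IsMarkovKernel κ]
    (φ : X → A → Fin d → ℝ)
    (hφmeas : ∀ (a : A) (i : Fin d), Measurable fun x => φ x a i)
    (hφbd : ∀ x a i, |φ x a i| ≤ 1)
    (P₀ : Measure X) [IsProbabilityMeasure P₀]
    (H : ℕ)
    (πE : X → A → ℝ) (hπE_meas : ∀ a, Measurable fun x => πE x a)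
    (hπE_nonneg : ∀ x a, 0 ≤ πE x a) (hπE_sum : ∀ x, ∑ a, πE x a = 1)
    (πU : X → A → ℝ) (hπU : ∀ x a, πU x a = 1 / Fintype.card A)
    (c : ℝ) (hc : ∀ x a, πE x a * Fintype.card A ≤ c)
    (SE SU : Matrix (Fin d) (Fin d) ℝ)
    (hSE : ∀ i j, SE i j = (1 / H : ℝ) * ∫ x, gramRec κ φ πE H x i j ∂P₀)
    (hSU : ∀ i j, SU i j = (1 / H : ℝ) * ∫ x, gramRec κ φ πU H x i j ∂P₀) :
    (∀ β : Fin d → ℝ,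
      ∑ i, ∑ j, β i * SE i j * β j ≤ c ^ H * ∑ i, ∑ j, β i * SU i j * β j) ∧
    (∀ s, 1 ≤ s → s ≤ d →
      restrictedMinEigenvalueSq SU s ≥ (c ^ H)⁻¹ * restrictedMinEigenvalueSq SE s ∧
      Real.sqrt (restrictedMinEigenvalueSq SU s) ≥
        (c ^ H)⁻¹ * Real.sqrt (restrictedMinEigenvalueSq SE s)) := by
  obtain rfl : SE = expectedGram κ φ πE P₀ H := Matrix.ext hSE
  obtain rfl : SU = expectedGram κ φ πU P₀ H := Matrix.ext hSU
  have hE : IsMarkovPolicy πE := ⟨hπE_meas, hπE_nonneg, hπE_sum⟩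
  have hU : IsMarkovPolicy πU := funext₂ hπU ▸ isMarkovPolicy_uniform
  have hratio : ∀ x a, πE x a ≤ c * πU x a := fun x a => by
    rw [hπU, mul_one_div, le_div_iff₀ (by positivity)]
    exact hc x a
  obtain ⟨x₀⟩ := nonempty_of_isProbabilityMeasure P₀
  have hc1 : 1 ≤ c := hE.one_le_of_le_mul hU (hratio x₀)
  have hcH : 1 ≤ c ^ H := one_le_pow₀ hc1
  have hLoewner := quadForm_expectedGram_le_pow_mul κ P₀ H hE hU hφmeas hφbd hc1 hratio
  refine ⟨hLoewner, fun s _ _ => ?_⟩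
  have hσ := inv_mul_restrictedMinEigenvalueSq_le (zero_lt_one.trans_le hcH)
    (quadForm_expectedGram_nonneg κ P₀ H hE hφmeas hφbd) hLoewner s
  exact ⟨hσ, mul_sqrt_le_sqrt_of_mul_le (by positivity) (inv_le_one_of_one_le₀ hcH)
    (restrictedMinEigenvalueSq_nonneg (quadForm_expectedGram_nonneg κ P₀ H hE hφmeas hφbd) s) hσ⟩

/-- **The uniform policy is exploratory whenever any exploratory policy exists.**
If `π^E` is any Markov policy with `π^E(x,a)·|A| ≤ c` for all `(x,a)`, and `π^U` is the
uniform policy, then the expected Gram matrices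
`Σ(π) = E^π[(1/H) Σ_{h=1}^H φ(X_h,A_h)φ(X_h,A_h)ᵀ]` satisfy `Σ(π^E) ⪯ c^H Σ(π^U)` in the
positive semidefinite order; consequently `σ²_min(Σ(π^U), s) ≥ c^{−H} σ²_min(Σ(π^E), s)`
and (since `c ≥ 1`) `σ_min(Σ(π^U), s) ≥ c^{−H} σ_min(Σ(π^E), s)` for every `s ∈ {1,…,d}`. -/
theorem uniform_policy_exploratory
    {X : Type*} [MeasurableSpace X] {A : Type*} [MeasurableSpace A] [Fintype A] [Nonempty A]
    {d : ℕ} (hd : 1 ≤ d)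
    (κ : Kernel (X × A) X) [IsMarkovKernel κ]
    (φ : X → A → Fin d → ℝ)
    (hφmeas : ∀ (a : A) (i : Fin d), Measurable fun x => φ x a i)
    (hφbd : ∀ x a i, |φ x a i| ≤ 1)
    (P₀ : Measure X) [IsProbabilityMeasure P₀]
    (H : ℕ) (hH : 1 ≤ H)
    (πE : X → A → ℝ) (hπE_meas : ∀ a, Measurable fun x => πE x a)
    (hπE_nonneg : ∀ x a, 0 ≤ πE x a) (hπE_sum : ∀ x, ∑ a, πE x a = 1)
    (πU : X → A → ℝ) (hπU : ∀ x a, πU x a = 1 / Fintype.card A)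
    (c : ℝ) (hc : ∀ x a, πE x a * Fintype.card A ≤ c)
    (SE SU : Matrix (Fin d) (Fin d) ℝ)
    (hSE : ∀ i j, SE i j = (1 / H : ℝ) * ∫ x, gramRec κ φ πE H x i j ∂P₀)
    (hSU : ∀ i j, SU i j = (1 / H : ℝ) * ∫ x, gramRec κ φ πU H x i j ∂P₀) :
    (∀ β : Fin d → ℝ,
      ∑ i, ∑ j, β i * SE i j * β j ≤ c ^ H * ∑ i, ∑ j, β i * SU i j * β j) ∧
    (∀ s, 1 ≤ s → s ≤ d →
      restrictedMinEigenvalueSq SU s ≥ (c ^ H)⁻¹ * restrictedMinEigenvalueSq SE s ∧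
      Real.sqrt (restrictedMinEigenvalueSq SU s) ≥
        (c ^ H)⁻¹ * Real.sqrt (restrictedMinEigenvalueSq SE s)) :=
  uniform_policy_exploratory_general κ φ hφmeas hφbd P₀ H πE hπE_meas hπE_nonneg hπE_sum πU hπU c hc
    SE SU hSE hSU
end
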